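/- arXiv:1309.6937 — 5 statements merged into one kernel-verified Lean document; each statement's English description precedes it below -/
import Mathlib

section
/- Let P = [[e,g],[h,f]] and P' = [[f,-g],[-h,e]] be 2×2 complex matrices, and let A = [[a,b],[-b̄,ā]] and C = [[c,d],[-d̄,c̄]] be 2×2 matrices of quaternion type. Then A·P·C* + C·P'·A* is a scalar multiple of the identity matrix I₂. -/
/-!
A quaternion-type matrix `X` satisfies `Xᴴ = adj X`, and `P' = adj P`. Since the adjugate is
multiplicative in reverse order and an involution on `2 × 2` matrices, the second summand is
`C * adj P * adj A = adj (A * P * adj C)`, i.e. the adjugate of the first summand `M`. For any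
`2 × 2` matrix, `M + adj M = (tr M) • 1`.
-/

open Matrix

namespace Matrix

variable {R : Type*} [CommRing R]

theorem add_adjugate_fin_two (M : Matrix (Fin 2) (Fin 2) R) :
    M + adjugate M = trace M • (1 : Matrix (Fin 2) (Fin 2) R) := by
  rw [adjugate_fin_two, trace_fin_two]
  ext i j
  fin_cases i <;> fin_cases j <;> simp [add_comm]

theorem adjugate_adjugate_fin_two (M : Matrix (Fin 2) (Fin 2) R) : adjugate (adjugate M) = M := by
  simp [adjugate_adjugate']

variable [StarRing R]

theorem conjTranspose_eq_adjugate_of_quaternion (a b : R) :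
    (!![a, b; -star b, star a])ᴴ = adjugate !![a, b; -star b, star a] := by
  rw [adjugate_fin_two_of]
  ext i j
  fin_cases i <;> fin_cases j <;> simp

theorem mul_mul_add_mul_adjugate_mul_eq_trace_smul {A C : Matrix (Fin 2) (Fin 2) R}
    (hA : Aᴴ = adjugate A) (hC : Cᴴ = adjugate C) (P : Matrix (Fin 2) (Fin 2) R) :
    A * P * Cᴴ + C * adjugate P * Aᴴ = trace (A * P * Cᴴ) • (1 : Matrix (Fin 2) (Fin 2) R) := by
  have hsecond : C * adjugate P * Aᴴ = adjugate (A * P * Cᴴ) := by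
    rw [hA, hC, adjugate_mul_distrib, adjugate_mul_distrib, adjugate_adjugate_fin_two,
      Matrix.mul_assoc]
  rw [hsecond, add_adjugate_fin_two]

end Matrix

theorem quaternion_type_sandwich_scalar (e g h f a b c d : ℂ)
    (P P' A C : Matrix (Fin 2) (Fin 2) ℂ)
    (hP : P = !![e, g; h, f])
    (hP' : P' = !![f, -g; -h, e])
    (hA : A = !![a, b; -(starRingEnd ℂ b), starRingEnd ℂ a])
    (hC : C = !![c, d; -(starRingEnd ℂ d), starRingEnd ℂ c]) :
    ∃ t : ℂ, A * P * Cᴴ + C * P' * Aᴴ = t • (1 : Matrix (Fin 2) (Fin 2) ℂ) := by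
  have hA' : Aᴴ = adjugate A := hA ▸ conjTranspose_eq_adjugate_of_quaternion a b
  have hC' : Cᴴ = adjugate C := hC ▸ conjTranspose_eq_adjugate_of_quaternion c d
  rw [hP', ← adjugate_fin_two_of, ← hP]
  exact ⟨_, mul_mul_add_mul_adjugate_mul_eq_trace_smul hA' hC' P⟩
end

section
/- Let W be an n×n quaternion Hermitian (self-dual) matrix, represented as a 2n×2n complex Hermitian matrix W^R via the standard embedding of quaternions into 2×2 complex matrices. Then for any z ∈ ℂ with Im z > 0, the resolvent (W^R − z·I₂ₙ)⁻¹ has the property that each diagonal 2×2 block is a scalar multiple of the identity matrix I₂. -/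
open Complex Matrix Quaternion

/-- The standard embedding of a quaternion as a `2 × 2` complex matrix. -/
noncomputable def quatToMatrix (x : ℍ[ℝ]) : Matrix (Fin 2) (Fin 2) ℂ :=
  !![(x.re : ℂ) + x.imI * I, (x.imJ : ℂ) + x.imK * I;
     -((x.imJ : ℂ) - x.imK * I), (x.re : ℂ) - x.imI * I]

/-- The `2n × 2n` complex representation of an `n × n` quaternion matrix. -/
noncomputable def quatMatrixRep {n : ℕ} (W : Matrix (Fin n) (Fin n) ℍ[ℝ]) :
    Matrix (Fin n × Fin 2) (Fin n × Fin 2) ℂ :=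
  fun p q => quatToMatrix (W p.1 q.1) p.2 q.2

/-- The `(j,k)`-th `2 × 2` block of a `2n × 2n` complex matrix. -/
def blk {n : ℕ} (M : Matrix (Fin n × Fin 2) (Fin n × Fin 2) ℂ)
    (j k : Fin n) : Matrix (Fin 2) (Fin 2) ℂ :=
  fun p q => M (j, p) (k, q)

/-!
For a quaternion Hermitian `W`, the representation satisfies the symplectic symmetry
`Wᴿᵀ J = J Wᴿ` with `J = diag(J₂, …, J₂)`, because `J₂⁻¹ (quatToMatrix x)ᵀ J₂ = quatToMatrix (x̄)`.
The relation survives shifting by `z • 1` and inversion, so `R = (Wᴿ - z)⁻¹` satisfies it too.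
On a diagonal block it reads `Bᵀ J₂ = J₂ B`, i.e. `B` equals its own adjugate, which forces
`B` to be scalar.
-/

open scoped Kronecker

namespace Matrix

variable {ι R : Type*} [Fintype ι] [DecidableEq ι] [CommRing R]

theorem nonsing_inv_transpose_mul_eq_mul_nonsing_inv {A J : Matrix ι ι R}
    (h : Aᵀ * J = J * A) : A⁻¹ᵀ * J = J * A⁻¹ := by
  by_cases hA : IsUnit A.det
  · calc A⁻¹ᵀ * J = A⁻¹ᵀ * (Aᵀ * J) * A⁻¹ := by
          rw [h, Matrix.mul_assoc, Matrix.mul_assoc, mul_nonsing_inv A hA, Matrix.mul_one]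
      _ = J * A⁻¹ := by
          rw [← Matrix.mul_assoc, ← transpose_mul, mul_nonsing_inv A hA, transpose_one,
            Matrix.one_mul]
  · simp [nonsing_inv_apply_not_isUnit A hA]

end Matrix

def J₂ (R : Type*) [Ring R] : Matrix (Fin 2) (Fin 2) R := !![0, 1; -1, 0]

theorem eq_smul_one_of_transpose_mul_J₂ {K : Type*} [Ring K] [NoZeroDivisors K] [CharZero K]
    {M : Matrix (Fin 2) (Fin 2) K} (h : Mᵀ * J₂ K = J₂ K * M) : M = M 0 0 • 1 := by
  have h00 := congrFun₂ h 0 0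
  have h01 := congrFun₂ h 0 1
  have h11 := congrFun₂ h 1 1
  simp only [J₂, mul_apply, Fin.sum_univ_two, transpose_apply, of_apply, cons_val',
    cons_val_zero, cons_val_one, empty_val', cons_val_fin_one, mul_zero, mul_one, mul_neg,
    zero_add, add_zero, zero_mul, one_mul, neg_mul] at h00 h01 h11
  ext p q
  fin_cases p <;> fin_cases q
  · simp
  · simpa using self_eq_neg.mp h11
  · simpa using self_eq_neg.mp h00.symm
  · simpa using h01.symm

def blockJ₂ (n : ℕ) : Matrix (Fin n × Fin 2) (Fin n × Fin 2) ℂ := 1 ⊗ₖ J₂ ℂ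

theorem transpose_mul_blockJ₂_iff {n : ℕ} (M : Matrix (Fin n × Fin 2) (Fin n × Fin 2) ℂ) :
    Mᵀ * blockJ₂ n = blockJ₂ n * M ↔
      ∀ j k, (blk M k j)ᵀ * J₂ ℂ = J₂ ℂ * blk M j k := by
  have lhs : ∀ j k p q, (Mᵀ * blockJ₂ n) (j, p) (k, q) = ((blk M k j)ᵀ * J₂ ℂ) p q := by
    intro j k p q
    simp [Matrix.mul_apply, Fintype.sum_prod_type, blockJ₂, one_apply, blk]
  have rhs : ∀ j k p q, (blockJ₂ n * M) (j, p) (k, q) = (J₂ ℂ * blk M j k) p q := by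
    intro j k p q
    simp [Matrix.mul_apply, Fintype.sum_prod_type, blockJ₂, one_apply, blk]
  constructor
  · intro h j k
    ext p q
    rw [← lhs, ← rhs, h]
  · intro h
    ext ⟨j, p⟩ ⟨k, q⟩
    rw [lhs, rhs, h]

theorem quatToMatrix_star_transpose_mul_J₂ (x : ℍ[ℝ]) :
    (quatToMatrix (star x))ᵀ * J₂ ℂ = J₂ ℂ * quatToMatrix x := by
  ext p q
  fin_cases p <;> fin_cases q <;>
    simp [quatToMatrix, J₂, Matrix.mul_apply, Fin.sum_univ_two] <;> ring

theorem quatMatrixRep_transpose_mul_blockJ₂ {n : ℕ} {W : Matrix (Fin n) (Fin n) ℍ[ℝ]}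
    (hW : W.IsHermitian) :
    (quatMatrixRep W)ᵀ * blockJ₂ n = blockJ₂ n * quatMatrixRep W := by
  rw [transpose_mul_blockJ₂_iff]
  intro j k
  change (quatToMatrix (W k j))ᵀ * J₂ ℂ = J₂ ℂ * quatToMatrix (W j k)
  rw [← hW.apply k j]
  exact quatToMatrix_star_transpose_mul_J₂ (W j k)

theorem resolvent_diagonal_blocks_scalar_general {n : ℕ}
    (W : Matrix (Fin n) (Fin n) ℍ[ℝ]) (hW : W.IsHermitian)
    (z : ℂ) (j : Fin n) :
    ∃ t : ℂ,
      blk ((quatMatrixRep W - z • (1 : Matrix (Fin n × Fin 2) (Fin n × Fin 2) ℂ))⁻¹) j j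
        = t • (1 : Matrix (Fin 2) (Fin 2) ℂ) := by
  set A := quatMatrixRep W - z • (1 : Matrix (Fin n × Fin 2) (Fin n × Fin 2) ℂ)
  have hA : Aᵀ * blockJ₂ n = blockJ₂ n * A := by
    simp only [A, transpose_sub, transpose_smul, transpose_one, Matrix.sub_mul, Matrix.mul_sub,
      quatMatrixRep_transpose_mul_blockJ₂ hW, Matrix.smul_mul, Matrix.mul_smul, Matrix.one_mul,
      Matrix.mul_one]
  have hR := (transpose_mul_blockJ₂_iff _).1
    (nonsing_inv_transpose_mul_eq_mul_nonsing_inv hA) j j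
  exact ⟨_, eq_smul_one_of_transpose_mul_J₂ hR⟩

theorem resolvent_diagonal_blocks_scalar {n : ℕ}
    (W : Matrix (Fin n) (Fin n) ℍ[ℝ]) (hW : W.IsHermitian)
    (z : ℂ) (hz : 0 < z.im) (j : Fin n) :
    ∃ t : ℂ,
      blk ((quatMatrixRep W - z • (1 : Matrix (Fin n × Fin 2) (Fin n × Fin 2) ℂ))⁻¹) j j
        = t • (1 : Matrix (Fin 2) (Fin 2) ℂ) :=
  resolvent_diagonal_blocks_scalar_general W hW z j
end

section
/- Every eigenvalue of the 2n×2n complex Hermitian matrix representation W^R of an n×n quaternion Hermitian matrix W has even multiplicity (multiplicity at least 2). -/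
/-!
An eigenvalue `μ` of the Hermitian matrix `W^R` is real. Under the identification
`a + b j ↦ (a, -b̄)` of `ℍ` with `ℂ²`, `quatToMatrix x` is left multiplication by `x`, so right
multiplication by `j` gives an antilinear map `J` of `ℂ^(2n)` commuting with `W^R` and with
`J² = -1`. Since `μ` is real, `J` preserves the `μ`-eigenspace, and together with multiplication
by `i` it makes that eigenspace a module over `ℍ`. Its real dimension, twice its complex
dimension, is then divisible by `4`.
-/

open Complex Matrix Quaternion

open ComplexConjugate Module

section AntilinearStructure

variable {E : Type*} [AddCommGroup E] [Module ℂ E]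

def LinearMap.toRealLinear (J : E →ₗ⋆[ℂ] E) : E →ₗ[ℝ] E where
  toFun := J
  map_add' := J.map_add
  map_smul' r v := by simpa [Complex.coe_smul] using J.map_smulₛₗ (r : ℂ) v

def quaternionBasisOfAntilinear (J : E →ₗ⋆[ℂ] E) (hJ : ∀ v, J (J v) = -v) :
    QuaternionAlgebra.Basis (Module.End ℝ E) (-1 : ℝ) 0 (-1) where
  i := (LinearMap.lsmul ℂ E I).restrictScalars ℝ
  j := J.toRealLinear
  k := (LinearMap.lsmul ℂ E I).restrictScalars ℝ * J.toRealLinear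
  i_mul_i := by ext v; simp [smul_smul]
  j_mul_j := by ext v; simp [LinearMap.toRealLinear, hJ]
  i_mul_j := rfl
  j_mul_i := by ext v; simp [LinearMap.toRealLinear]

theorem even_finrank_of_antilinear_sq_eq_neg (J : E →ₗ⋆[ℂ] E) (hJ : ∀ v, J (J v) = -v) :
    Even (finrank ℂ E) := by
  let φ : ℍ[ℝ] →ₐ[ℝ] Module.End ℝ E := (quaternionBasisOfAntilinear J hJ).liftHom
  let _ : Module ℍ[ℝ] E := Module.compHom E φ.toRingHom
  have : IsScalarTower ℝ ℍ[ℝ] E := ⟨fun r q v => by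
    change φ (r • q) v = r • φ q v
    rw [map_smul]; rfl⟩
  have hdim := finrank_mul_finrank ℝ ℍ[ℝ] E
  rw [Quaternion.finrank_eq_four, finrank_real_of_complex] at hdim
  exact ⟨finrank ℍ[ℝ] E, by omega⟩

theorem even_finrank_eigenspace_of_antilinear {f : Module.End ℂ E} (J : E →ₗ⋆[ℂ] E)
    (hJ : ∀ v, J (J v) = -v) (hfJ : ∀ v, f (J v) = J (f v)) {μ : ℂ} (hμ : conj μ = μ) :
    Even (finrank ℂ (f.eigenspace μ)) := by
  have hmaps : ∀ v ∈ f.eigenspace μ, J v ∈ f.eigenspace μ := by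
    intro v hv
    rw [End.mem_eigenspace_iff] at hv ⊢
    rw [hfJ, hv, J.map_smulₛₗ, hμ]
  exact even_finrank_of_antilinear_sq_eq_neg (J.restrict hmaps) fun v => Subtype.ext (hJ v)

end AntilinearStructure

theorem Matrix.IsHermitian.conj_eq_of_hasEigenvalue {m 𝕜 : Type*} [Fintype m] [DecidableEq m]
    [RCLike 𝕜] {A : Matrix m m 𝕜} (hA : A.IsHermitian) {μ : 𝕜}
    (hμ : End.HasEigenvalue (toLin' A) μ) : conj μ = μ := by
  have hspec := hμ.mem_spectrum
  rw [spectrum_toLin', hA.spectrum_eq_image_range] at hspec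
  obtain ⟨r, -, rfl⟩ := hspec
  exact RCLike.conj_ofReal r

theorem quatToMatrix_star (x : ℍ[ℝ]) : quatToMatrix (star x) = (quatToMatrix x)ᴴ := by
  ext s t
  fin_cases s <;> fin_cases t <;> simp [quatToMatrix, Complex.ext_iff]

theorem quatToMatrix_one_one (x : ℍ[ℝ]) : quatToMatrix x 1 1 = conj (quatToMatrix x 0 0) := by
  simp [quatToMatrix, Complex.ext_iff]

theorem quatToMatrix_one_zero (x : ℍ[ℝ]) : quatToMatrix x 1 0 = -conj (quatToMatrix x 0 1) := by
  simp [quatToMatrix, Complex.ext_iff]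

theorem isHermitian_quatMatrixRep {n : ℕ} {W : Matrix (Fin n) (Fin n) ℍ[ℝ]}
    (hW : W.IsHermitian) : (quatMatrixRep W).IsHermitian := by
  ext p q
  rw [conjTranspose_apply, quatMatrixRep, quatMatrixRep, ← hW.apply p.1 q.1, quatToMatrix_star]
  rfl

/-- Right multiplication by `j` in each quaternion coordinate, in the identification above. -/
noncomputable def quatJ (ι : Type*) : (ι × Fin 2 → ℂ) →ₗ⋆[ℂ] (ι × Fin 2 → ℂ) where
  toFun v p := if p.2 = 0 then conj (v (p.1, 1)) else -conj (v (p.1, 0))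
  map_add' u v := by ext ⟨i, s⟩; fin_cases s <;> simp [add_comm]
  map_smul' c v := by ext ⟨i, s⟩; fin_cases s <;> simp

theorem quatJ_quatJ {ι : Type*} (v : ι × Fin 2 → ℂ) : quatJ ι (quatJ ι v) = -v := by
  ext ⟨i, s⟩
  fin_cases s <;> simp [quatJ]

theorem quatMatrixRep_mulVec_quatJ {n : ℕ} (W : Matrix (Fin n) (Fin n) ℍ[ℝ])
    (v : Fin n × Fin 2 → ℂ) : quatMatrixRep W *ᵥ quatJ _ v = quatJ _ (quatMatrixRep W *ᵥ v) := by
  ext ⟨i, s⟩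
  fin_cases s <;> simp [quatJ, mulVec, dotProduct, Fintype.sum_prod_type, quatMatrixRep,
    ← Finset.sum_neg_distrib, quatToMatrix_one_one, quatToMatrix_one_zero, add_comm]

theorem eigenvalues_even_multiplicity {n : ℕ}
    (W : Matrix (Fin n) (Fin n) ℍ[ℝ]) (hW : W.IsHermitian) (μ : ℂ) :
    Even (Module.finrank ℂ
      (Module.End.eigenspace (Matrix.toLin' (quatMatrixRep W)) μ)) ∧
    (Module.End.HasEigenvalue (Matrix.toLin' (quatMatrixRep W)) μ →
      2 ≤ Module.finrank ℂ
        (Module.End.eigenspace (Matrix.toLin' (quatMatrixRep W)) μ)) := by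
  by_cases hμ : End.HasEigenvalue (toLin' (quatMatrixRep W)) μ
  · have heven := even_finrank_eigenspace_of_antilinear (f := toLin' (quatMatrixRep W))
      (quatJ (Fin n)) quatJ_quatJ (quatMatrixRep_mulVec_quatJ W)
      ((isHermitian_quatMatrixRep hW).conj_eq_of_hasEigenvalue hμ)
    have hpos := Submodule.one_le_finrank_iff.mpr (End.hasEigenvalue_iff.mp hμ)
    exact ⟨heven, fun _ => by obtain ⟨k, hk⟩ := heven; omega⟩
  · refine ⟨?_, fun h => absurd h hμ⟩
    rw [End.hasEigenvalue_iff, not_not] at hμ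
    rw [hμ, finrank_bot]
    exact Even.zero
end

section
/- Let A and B be two n×n Hermitian complex matrices with empirical spectral distributions F^A and F^B. Then ‖F^A − F^B‖_∞ ≤ rank(A−B)/n. -/
/-!
Count eigenvalues `≤ x` for two self-adjoint operators `T`, `S` on an `n`-dimensional space.
On the span `W` of the eigenvectors of `T` with eigenvalue `≤ x` the Rayleigh quotient of `T` is
`≤ x`; on the span `U` of the eigenvectors of `S` with eigenvalue `> x` that of `S` is `> x`.
On `ker (T - S)` the two quotients agree, so `W ⊓ ker (T - S) ⊓ U = 0`, and counting dimensions
gives `#{λ(T) ≤ x} + (n - rank (T - S)) + (n - #{λ(S) ≤ x}) ≤ 2n`. Exchanging `T` and `S` and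
dividing by `n` bounds the distance of the empirical spectral distributions.
-/

open Complex Matrix

/-- The empirical spectral distribution function of an `n × n` complex matrix:
it puts mass `1/n` at (the real part of) each eigenvalue, i.e. each root of the
characteristic polynomial counted with multiplicity. -/
noncomputable def esd {n : ℕ} (A : Matrix (Fin n) (Fin n) ℂ) (x : ℝ) : ℝ :=
  ((A.charpoly.roots.filter fun μ => μ.re ≤ x).card : ℝ) / n

open Finset Module Submodule

theorem Submodule.finrank_add_finrank_add_finrank_le_of_disjoint_inf {K V : Type*}
    [DivisionRing K] [AddCommGroup V] [Module K V] [FiniteDimensional K V]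
    {W L U : Submodule K V} (h : Disjoint (W ⊓ L) U) :
    finrank K W + finrank K L + finrank K U ≤ 2 * finrank K V := by
  have hWL := finrank_sup_add_finrank_inf_eq W L
  have hsup := (W ⊔ L).finrank_le
  have hinf := finrank_add_finrank_le_of_disjoint h
  omega

namespace OrthonormalBasis

variable {ι 𝕜 E : Type*} [Fintype ι] [RCLike 𝕜] [NormedAddCommGroup E] [InnerProductSpace 𝕜 E]

theorem mem_span_image_iff (b : OrthonormalBasis ι 𝕜 E) (s : Set ι) (v : E) :
    v ∈ span 𝕜 (b '' s) ↔ ∀ i ∉ s, b.repr v i = 0 := by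
  rw [← b.coe_toBasis, Module.Basis.mem_span_image, Finsupp.support_subset_iff]
  simp only [b.coe_toBasis_repr_apply]

theorem finrank_span_image (b : OrthonormalBasis ι 𝕜 E) (s : Finset ι) :
    finrank 𝕜 (span 𝕜 (b '' s)) = #s := by
  have hli := b.orthonormal.linearIndependent.comp ((↑) : s → ι) Subtype.val_injective
  rw [Set.image_eq_range]
  exact (finrank_span_eq_card hli).trans (by simp)

theorem norm_sq_eq_sum (b : OrthonormalBasis ι 𝕜 E) (v : E) :
    ‖v‖ ^ 2 = ∑ i, ‖b.repr v i‖ ^ 2 := by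
  rw [← b.repr.norm_map, EuclideanSpace.norm_sq_eq]

end OrthonormalBasis

namespace LinearMap.IsSymmetric

variable {𝕜 E : Type*} [RCLike 𝕜] [NormedAddCommGroup E] [InnerProductSpace 𝕜 E]
  [FiniteDimensional 𝕜 E] {n : ℕ} {T S : E →ₗ[𝕜] E}

theorem re_inner_apply_self_eq_sum (hT : T.IsSymmetric) (hn : finrank 𝕜 E = n) (v : E) :
    RCLike.re (inner 𝕜 (T v) v) =
      ∑ i, hT.eigenvalues hn i * ‖(hT.eigenvectorBasis hn).repr v i‖ ^ 2 := by
  rw [← (hT.eigenvectorBasis hn).repr.inner_map_map, PiLp.inner_apply, map_sum]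
  refine sum_congr rfl fun i _ => ?_
  rw [eigenvectorBasis_apply_self_apply, ← smul_eq_mul, inner_smul_left, RCLike.conj_ofReal,
    inner_self_eq_norm_sq_to_K]
  norm_cast

theorem re_inner_apply_self_le (hT : T.IsSymmetric) (hn : finrank 𝕜 E = n) {s : Set (Fin n)}
    {x : ℝ} (hs : ∀ i ∈ s, hT.eigenvalues hn i ≤ x) {v : E}
    (hv : v ∈ span 𝕜 (hT.eigenvectorBasis hn '' s)) :
    RCLike.re (inner 𝕜 (T v) v) ≤ x * ‖v‖ ^ 2 := by
  rw [re_inner_apply_self_eq_sum, (hT.eigenvectorBasis hn).norm_sq_eq_sum, mul_sum]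
  refine sum_le_sum fun i _ => ?_
  by_cases hi : i ∈ s
  · exact mul_le_mul_of_nonneg_right (hs i hi) (sq_nonneg _)
  · simp [((hT.eigenvectorBasis hn).mem_span_image_iff _ _).1 hv i hi]

theorem lt_re_inner_apply_self (hT : T.IsSymmetric) (hn : finrank 𝕜 E = n) {s : Set (Fin n)}
    {x : ℝ} (hs : ∀ i ∈ s, x < hT.eigenvalues hn i) {v : E}
    (hv : v ∈ span 𝕜 (hT.eigenvectorBasis hn '' s)) (hv₀ : v ≠ 0) :
    x * ‖v‖ ^ 2 < RCLike.re (inner 𝕜 (T v) v) := by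
  have hzero := ((hT.eigenvectorBasis hn).mem_span_image_iff _ _).1 hv
  obtain ⟨j, hj⟩ : ∃ j, (hT.eigenvectorBasis hn).repr v j ≠ 0 := by
    by_contra! h
    exact hv₀ ((hT.eigenvectorBasis hn).repr.map_eq_zero_iff.1 (PiLp.ext h))
  have hjs : j ∈ s := by
    by_contra hjs
    exact hj (hzero j hjs)
  rw [re_inner_apply_self_eq_sum, (hT.eigenvectorBasis hn).norm_sq_eq_sum, mul_sum]
  refine sum_lt_sum (fun i _ => ?_) ⟨j, mem_univ j, ?_⟩
  · by_cases hi : i ∈ s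
    · exact mul_le_mul_of_nonneg_right (hs i hi).le (sq_nonneg _)
    · simp [hzero i hi]
  · exact mul_lt_mul_of_pos_right (hs j hjs) (by positivity)

theorem card_eigenvalues_le_le_add_finrank_range_sub (hT : T.IsSymmetric) (hS : S.IsSymmetric)
    (hn : finrank 𝕜 E = n) (x : ℝ) :
    #{i | hT.eigenvalues hn i ≤ x} ≤
      #{i | hS.eigenvalues hn i ≤ x} + finrank 𝕜 (range (T - S)) := by
  set sT : Finset (Fin n) := {i | hT.eigenvalues hn i ≤ x}
  set sS : Finset (Fin n) := {i | x < hS.eigenvalues hn i}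
  set W := span 𝕜 (hT.eigenvectorBasis hn '' sT)
  set U := span 𝕜 (hS.eigenvectorBasis hn '' sS)
  have hdisj : Disjoint (W ⊓ ker (T - S)) U := by
    rw [disjoint_iff_inf_le]
    rintro v ⟨⟨hvW, hvK⟩, hvU⟩
    rw [mem_bot]
    by_contra hv₀
    have hTS : T v = S v := sub_eq_zero.1 hvK
    have hle := hT.re_inner_apply_self_le hn (s := sT) (x := x) (by simp [sT]) hvW
    have hlt := hS.lt_re_inner_apply_self hn (s := sS) (x := x) (by simp [sS]) hvU hv₀
    rw [hTS] at hle
    linarith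
  have hdim := finrank_add_finrank_add_finrank_le_of_disjoint_inf hdisj
  have hcard : #{i | hS.eigenvalues hn i ≤ x} + #sS = n := by
    simpa [sS, not_le] using
      card_filter_add_card_filter_not (s := univ) (fun i => hS.eigenvalues hn i ≤ x)
  have hrank := (T - S).finrank_range_add_finrank_ker
  rw [(hT.eigenvectorBasis hn).finrank_span_image,
    (hS.eigenvectorBasis hn).finrank_span_image] at hdim
  omega

theorem abs_card_eigenvalues_le_sub_le (hT : T.IsSymmetric) (hS : S.IsSymmetric)
    (hn : finrank 𝕜 E = n) (x : ℝ) :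
    |(#{i | hT.eigenvalues hn i ≤ x} : ℝ) - #{i | hS.eigenvalues hn i ≤ x}| ≤
      finrank 𝕜 (range (T - S)) := by
  have hTS := card_eigenvalues_le_le_add_finrank_range_sub hT hS hn x
  have hST := card_eigenvalues_le_le_add_finrank_range_sub hS hT hn x
  rw [← neg_sub, LinearMap.range_neg] at hST
  rw [abs_sub_le_iff, sub_le_iff_le_add', sub_le_iff_le_add']
  exact ⟨mod_cast hTS, mod_cast hST⟩

theorem card_filter_roots_charpoly_eq (hT : T.IsSymmetric) (hn : finrank 𝕜 E = n) (x : ℝ) :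
    (T.charpoly.roots.filter fun μ => RCLike.re μ ≤ x).card =
      #{i | hT.eigenvalues hn i ≤ x} := by
  rw [hT.roots_charpoly_eq_eigenvalues hn, Multiset.filter_map, Multiset.card_map]
  simp only [Function.comp_def, RCLike.ofReal_re]
  rfl

end LinearMap.IsSymmetric

namespace Matrix

variable {𝕜 : Type*} [RCLike 𝕜]

theorem charpoly_toEuclideanLin {ι : Type*} [Fintype ι] [DecidableEq ι] (A : Matrix ι ι 𝕜) :
    (toEuclideanLin A).charpoly = A.charpoly := by
  rw [toEuclideanLin_eq_toLin_orthonormal, charpoly_toLin]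

theorem rank_eq_finrank_range_toEuclideanLin {m n : Type*} [Fintype m] [Fintype n]
    [DecidableEq n] (A : Matrix m n 𝕜) :
    A.rank = finrank 𝕜 (LinearMap.range (toEuclideanLin A)) := by
  rw [toEuclideanLin_eq_toLin_orthonormal]
  exact A.rank_eq_finrank_range_toLin _ _

end Matrix

theorem esd_eq_card_eigenvalues_le {n : ℕ} {A : Matrix (Fin n) (Fin n) ℂ}
    (hA : (toEuclideanLin A).IsSymmetric) (x : ℝ) :
    esd A x = #{i | hA.eigenvalues finrank_euclideanSpace_fin i ≤ x} / n := by
  rw [esd, ← charpoly_toEuclideanLin,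
    ← hA.card_filter_roots_charpoly_eq finrank_euclideanSpace_fin]
  rfl

theorem esd_sup_dist_le_rank_general {n : ℕ}
    (A B : Matrix (Fin n) (Fin n) ℂ)
    (hA : A.IsHermitian) (hB : B.IsHermitian) :
    ∀ x : ℝ, |esd A x - esd B x| ≤ ((A - B).rank : ℝ) / n := by
  intro x
  have hA' := isSymmetric_toEuclideanLin_iff.mpr hA
  have hB' := isSymmetric_toEuclideanLin_iff.mpr hB
  rw [esd_eq_card_eigenvalues_le hA', esd_eq_card_eigenvalues_le hB', ← sub_div, abs_div,
    Nat.abs_cast, rank_eq_finrank_range_toEuclideanLin, map_sub]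
  gcongr
  exact hA'.abs_card_eigenvalues_le_sub_le hB' finrank_euclideanSpace_fin x

theorem esd_sup_dist_le_rank {n : ℕ} (hn : 0 < n)
    (A B : Matrix (Fin n) (Fin n) ℂ)
    (hA : A.IsHermitian) (hB : B.IsHermitian) :
    ∀ x : ℝ, |esd A x - esd B x| ≤ ((A - B).rank : ℝ) / n :=
  esd_sup_dist_le_rank_general A B hA hB
end

section
/- Let A be an n×n Hermitian complex matrix and A_k the (n−1)×(n−1) matrix obtained by deleting the k-th row and column. Then for z = u + iv with v > 0, |tr((A − zI_n)⁻¹) − tr((A_k − zI_{n−1})⁻¹)| ≤ 1/v. -/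
/-! Write `G = (A - z)⁻¹`. Deleting row and column `k` changes the inverse by the rank-one
Schur-complement term `G_{·k} G_{k·} / G_{kk}`, so `tr G - tr G⁽ᵏ⁾ = (G²)_{kk} / G_{kk}`. Since `G`
is normal, Cauchy–Schwarz bounds `|(G²)_{kk}|` by `∑ⱼ |G_{kj}|²`, while the resolvent identity
`G - Gᴴ = (z - z̄) G Gᴴ` gives `Im G_{kk} = v ∑ⱼ |G_{kj}|²`. -/

open Complex Matrix

open scoped ComplexConjugate

namespace Matrix

theorem norm_mul_apply_sq_le {α l m n : Type*} [SeminormedRing α] [Fintype m]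
    (M : Matrix l m α) (N : Matrix m n α) (i : l) (j : n) :
    ‖(M * N) i j‖ ^ 2 ≤ (∑ k, ‖M i k‖ ^ 2) * ∑ k, ‖N k j‖ ^ 2 := by
  have hsum : ‖(M * N) i j‖ ≤ ∑ k, ‖M i k‖ * ‖N k j‖ :=
    (norm_sum_le _ _).trans (Finset.sum_le_sum fun k _ => norm_mul_le _ _)
  calc ‖(M * N) i j‖ ^ 2 ≤ (∑ k, ‖M i k‖ * ‖N k j‖) ^ 2 := by gcongr
    _ ≤ _ := Finset.sum_mul_sq_le_sq_mul_sq _ _ _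

theorem mul_conjTranspose_self_apply_self {ι : Type*} [Fintype ι] (M : Matrix ι ι ℂ) (i : ι) :
    (M * Mᴴ) i i = ((∑ j, ‖M i j‖ ^ 2 : ℝ) : ℂ) := by
  simp [mul_apply, mul_conj, Complex.sq_norm]

theorem conjTranspose_mul_self_apply_self {ι : Type*} [Fintype ι] (M : Matrix ι ι ℂ) (i : ι) :
    (Mᴴ * M) i i = ((∑ j, ‖M j i‖ ^ 2 : ℝ) : ℂ) := by
  simp [mul_apply, conj_mul']

theorem sum_norm_sq_pos_of_isUnit_det {α ι : Type*} [NormedCommRing α] [Nontrivial α]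
    [Fintype ι] [DecidableEq ι] {M : Matrix ι ι α} (hM : IsUnit M.det) (i : ι) :
    0 < ∑ j, ‖M i j‖ ^ 2 := by
  obtain ⟨j, hj⟩ : ∃ j, M i j ≠ 0 := by
    by_contra! h
    exact not_isUnit_zero (det_eq_zero_of_row_eq_zero i h ▸ hM)
  exact Finset.sum_pos' (fun j _ => by positivity) ⟨j, Finset.mem_univ j, by positivity⟩

section Deletion

variable {K : Type*} [Field K] {n : ℕ} {B : Matrix (Fin (n + 1)) (Fin (n + 1)) K}

theorem inv_submatrix_succAbove (hB : IsUnit B.det) (k : Fin (n + 1)) (hk : B⁻¹ k k ≠ 0) :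
    (B.submatrix k.succAbove k.succAbove)⁻¹ = of fun i j =>
      B⁻¹ (k.succAbove i) (k.succAbove j)
        - B⁻¹ (k.succAbove i) k * B⁻¹ k (k.succAbove j) / B⁻¹ k k := by
  refine inv_eq_right_inv (ext fun i j => ?_)
  set G := B⁻¹
  set f : Fin (n + 1) → K := fun l => G l (k.succAbove j) - G l k * (G k (k.succAbove j) / G k k)
  have hfk : f k = 0 := by simp only [f, mul_div_cancel₀ _ hk, sub_self]
  have hBG : B * G = 1 := mul_nonsing_inv B hB
  calc _ = ∑ l : Fin n, B (k.succAbove i) (k.succAbove l) * f (k.succAbove l) := by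
        simp only [mul_apply, submatrix_apply, of_apply, f, mul_div_assoc]
    _ = ∑ l, B (k.succAbove i) l * f l := by
        rw [Fin.sum_univ_succAbove _ k, hfk, mul_zero, zero_add]
    _ = (B * G) (k.succAbove i) (k.succAbove j)
          - (B * G) (k.succAbove i) k * (G k (k.succAbove j) / G k k) := by
        simp only [f, mul_apply, mul_sub, Finset.sum_sub_distrib, Finset.sum_mul, mul_assoc]
    _ = (1 : Matrix (Fin n) (Fin n) K) i j := by
        simp [hBG, one_apply, Fin.succAbove_ne]

theorem trace_inv_sub_trace_inv_submatrix_succAbove (hB : IsUnit B.det) (k : Fin (n + 1))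
    (hk : B⁻¹ k k ≠ 0) :
    B⁻¹.trace - (B.submatrix k.succAbove k.succAbove)⁻¹.trace = (B⁻¹ * B⁻¹) k k / B⁻¹ k k := by
  rw [inv_submatrix_succAbove hB k hk, trace, trace, mul_apply, Fin.sum_univ_succAbove _ k,
    Fin.sum_univ_succAbove _ k]
  simp only [diag_apply, of_apply, Finset.sum_sub_distrib, ← Finset.sum_div]
  simp only [mul_comm (B⁻¹ (k.succAbove _) k)]
  field_simp
  ring

end Deletion

section Resolvent

variable {ι : Type*} [Fintype ι] [DecidableEq ι]

theorem inv_sub_smul_one_sub_inv_sub_smul_one {R : Type*} [CommRing R] {A : Matrix ι ι R}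
    {z w : R} (hz : IsUnit (A - z • 1).det) (hw : IsUnit (A - w • 1).det) :
    (A - z • 1)⁻¹ - (A - w • 1)⁻¹ = (z - w) • ((A - z • 1)⁻¹ * (A - w • 1)⁻¹) := by
  calc (A - z • 1)⁻¹ - (A - w • 1)⁻¹
      = (A - z • 1)⁻¹ * ((A - w • 1) - (A - z • 1)) * (A - w • 1)⁻¹ := by
        rw [Matrix.mul_sub, Matrix.sub_mul, nonsing_inv_mul _ hz, Matrix.one_mul,
          Matrix.mul_assoc, mul_nonsing_inv _ hw, Matrix.mul_one]
    _ = (z - w) • ((A - z • 1)⁻¹ * (A - w • 1)⁻¹) := by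
        rw [sub_sub_sub_cancel_left, ← sub_smul, Matrix.mul_smul, Matrix.mul_one, Matrix.smul_mul]

theorem commute_inv_sub_smul_one {K : Type*} [Field K] {A : Matrix ι ι K}
    {z w : K} (hz : IsUnit (A - z • 1).det) (hw : IsUnit (A - w • 1).det) (hzw : z ≠ w) :
    Commute (A - z • 1)⁻¹ (A - w • 1)⁻¹ := by
  have h := congrArg Neg.neg (inv_sub_smul_one_sub_inv_sub_smul_one hw hz)
  rw [neg_sub, inv_sub_smul_one_sub_inv_sub_smul_one hz hw, ← neg_smul, neg_sub] at h
  exact smul_right_injective _ (sub_ne_zero.2 hzw) h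

namespace IsHermitian

variable {A : Matrix ι ι ℂ} (hA : A.IsHermitian) {z : ℂ}
include hA

theorem isUnit_det_sub_smul_one (hz : z.im ≠ 0) : IsUnit (A - z • 1).det := by
  have hzA : z ∉ spectrum ℂ A := by
    rw [hA.spectrum_eq_image_range]
    rintro ⟨x, -, rfl⟩
    exact hz (by simp)
  rw [spectrum.mem_iff, not_not, Algebra.algebraMap_eq_smul_one] at hzA
  simpa only [neg_sub, isUnit_iff_isUnit_det] using hzA.neg

theorem conjTranspose_inv_sub_smul_one : (A - z • 1)⁻¹ᴴ = (A - conj z • 1)⁻¹ := by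
  rw [conjTranspose_nonsing_inv, conjTranspose_sub, conjTranspose_smul, conjTranspose_one, hA.eq]
  rfl

theorem inv_sub_smul_one_sub_conjTranspose (hz : z.im ≠ 0) :
    (A - z • 1)⁻¹ - (A - z • 1)⁻¹ᴴ = (z - conj z) • ((A - z • 1)⁻¹ * (A - z • 1)⁻¹ᴴ) := by
  rw [hA.conjTranspose_inv_sub_smul_one]
  exact inv_sub_smul_one_sub_inv_sub_smul_one (hA.isUnit_det_sub_smul_one hz)
    (hA.isUnit_det_sub_smul_one (by simpa using hz))

theorem im_inv_sub_smul_one_apply_self (hz : z.im ≠ 0) (k : ι) :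
    ((A - z • 1)⁻¹ k k).im = z.im * ∑ j, ‖(A - z • 1)⁻¹ k j‖ ^ 2 := by
  have h := congrArg (fun M => (M k k).im) (hA.inv_sub_smul_one_sub_conjTranspose hz)
  simp only [sub_apply, conjTranspose_apply, smul_apply, smul_eq_mul,
    mul_conjTranspose_self_apply_self, sub_im, star_def, conj_im, mul_im, ofReal_im,
    ofReal_re, sub_re, conj_re, mul_zero] at h
  linarith

theorem sum_norm_sq_inv_sub_smul_one_col_eq_row (hz : z.im ≠ 0) (k : ι) :
    ∑ j, ‖(A - z • 1)⁻¹ j k‖ ^ 2 = ∑ j, ‖(A - z • 1)⁻¹ k j‖ ^ 2 := by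
  have hzz : z ≠ conj z := fun h => hz (by simpa using (conj_eq_iff_im.1 h.symm))
  have h := (commute_inv_sub_smul_one (hA.isUnit_det_sub_smul_one hz)
    (hA.isUnit_det_sub_smul_one (by simpa using hz)) hzz).eq
  rw [← hA.conjTranspose_inv_sub_smul_one] at h
  have hkk := congrFun (congrFun h k) k
  rw [mul_conjTranspose_self_apply_self, conjTranspose_mul_self_apply_self] at hkk
  exact_mod_cast hkk.symm

end IsHermitian

end Resolvent

end Matrix

theorem trace_resolvent_minor_diff_le {n : ℕ}
    (A : Matrix (Fin (n + 1)) (Fin (n + 1)) ℂ) (hA : A.IsHermitian)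
    (k : Fin (n + 1)) (z : ℂ) (hz : 0 < z.im) :
    ‖(((A - z • (1 : Matrix (Fin (n + 1)) (Fin (n + 1)) ℂ))⁻¹).trace
          - ((A.submatrix k.succAbove k.succAbove
              - z • (1 : Matrix (Fin n) (Fin n) ℂ))⁻¹).trace)‖
      ≤ 1 / z.im := by
  have hv : z.im ≠ 0 := hz.ne'
  have hdet := hA.isUnit_det_sub_smul_one hv
  set G := (A - z • (1 : Matrix (Fin (n + 1)) (Fin (n + 1)) ℂ))⁻¹
  set P := ∑ j, ‖G k j‖ ^ 2
  have hP : 0 < P := sum_norm_sq_pos_of_isUnit_det (isUnit_nonsing_inv_det _ hdet) k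
  have hGkk : z.im * P ≤ ‖G k k‖ := hA.im_inv_sub_smul_one_apply_self hv k ▸ im_le_norm _
  have hG2 : ‖(G * G) k k‖ ≤ P := by
    have hcol : ∑ j, ‖G j k‖ ^ 2 = P := hA.sum_norm_sq_inv_sub_smul_one_col_eq_row hv k
    refine le_of_pow_le_pow_left₀ two_ne_zero hP.le ?_
    calc ‖(G * G) k k‖ ^ 2 ≤ P * ∑ j, ‖G j k‖ ^ 2 := norm_mul_apply_sq_le G G k k
      _ = P ^ 2 := by rw [hcol, sq]
  have hminor : A.submatrix k.succAbove k.succAbove - z • 1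
      = (A - z • 1).submatrix k.succAbove k.succAbove := by
    rw [← submatrix_one (α := ℂ) k.succAbove Fin.succAbove_right_injective]
    rfl
  have hGkk0 : G k k ≠ 0 := norm_pos_iff.1 ((mul_pos hz hP).trans_le hGkk)
  rw [hminor, trace_inv_sub_trace_inv_submatrix_succAbove hdet k hGkk0, norm_div]
  calc ‖(G * G) k k‖ / ‖G k k‖ ≤ P / (z.im * P) := div_le_div₀ hP.le hG2 (mul_pos hz hP) hGkk
    _ = 1 / z.im := by field_simp
end
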